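/- arXiv:2205.09562 — 9 statements merged into one kernel-verified Lean document; each statement's English description precedes it below -/
import Mathlib

section
/- Every quotient map q : X → Y from a k_ω-space X onto a Hausdorff space Y is a compact-cover map, i.e., for every compact set C ⊆ Y there exists a compact set K ⊆ X with q(K) = C. -/
open Set Topology

/-- A `k_ω`-structure on a topological space `X`: a countable cover by compact sets
such that a set is closed iff its intersection with each `K n` is closed in `K n`. -/
def IsKOmegaStructure {X : Type*} [TopologicalSpace X] (K : ℕ → Set X) : Prop :=
  (∀ n, IsCompact (K n)) ∧ (⋃ n, K n) = Set.univ ∧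
    ∀ F : Set X, IsClosed F ↔ ∀ n, IsClosed (((↑) : K n → X) ⁻¹' F)

/-- A compact-cover map: a continuous surjection such that every compact subset of the
codomain is the image of a compact subset of the domain. -/
def IsCompactCoverMap {X Y : Type*} [TopologicalSpace X] [TopologicalSpace Y]
    (f : X → Y) : Prop :=
  Continuous f ∧ Function.Surjective f ∧
    ∀ C : Set Y, IsCompact C → ∃ K : Set X, IsCompact K ∧ f '' K = C

/-!
The images `q '' K n` of a `k_ω`-structure of `X` form a `k_ω`-structure of `Y`, because `q` is
a quotient map. In a `T₁` space with a `k_ω`-structure every compact set `C` lies in one of the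
finite unions `K 0 ∪ ⋯ ∪ K n`: otherwise a sequence of points `y n ∈ C` outside the `n`-th union
meets every `K n` in a finite set, so all its subsets are closed, and it is an infinite closed
discrete subset of `C`. Hence `C ⊆ q '' (K 0 ∪ ⋯ ∪ K n)`, and `C` is the image of the compact set
`(K 0 ∪ ⋯ ∪ K n) ∩ q ⁻¹' C`.
-/

theorem Set.image_accumulate {α β : Type*} (f : α → β) (s : ℕ → Set α) (n : ℕ) :
    f '' accumulate s n = accumulate (fun i => f '' s i) n := by
  simp only [accumulate_def, image_iUnion₂]

namespace IsKOmegaStructure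

variable {X : Type*} [TopologicalSpace X] {K : ℕ → Set X}

theorem isCompact_accumulate (hK : IsKOmegaStructure K) (n : ℕ) : IsCompact (accumulate K n) :=
  _root_.isCompact_accumulate hK.1 n

theorem image_of_isQuotientMap {Y : Type*} [TopologicalSpace Y] (hK : IsKOmegaStructure K)
    {q : X → Y} (hq : IsQuotientMap q) : IsKOmegaStructure fun n => q '' K n := by
  refine ⟨fun n => (hK.1 n).image hq.continuous, ?_, fun F => ⟨?_, fun hF => ?_⟩⟩
  · rw [← image_iUnion, hK.2.1, image_univ_of_surjective hq.surjective]
  · exact fun hF n => hF.preimage continuous_subtype_val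
  · rw [← hq.isClosed_preimage, hK.2.2]
    exact fun n => (hF n).preimage (hq.continuous.restrict (mapsTo_image q (K n)))

theorem exists_subset_accumulate_of_finite (hK : IsKOmegaStructure K) {A : Set X}
    (hA : A.Finite) : ∃ n, A ⊆ accumulate K n := by
  have hcover : (hA.toFinset : Set X) ⊆ ⋃ n, accumulate K n := by
    rw [iUnion_accumulate, hK.2.1]
    exact subset_univ _
  simpa using directed_accumulate.exists_mem_subset_of_finset_subset_biUnion hcover

theorem isClosed_of_forall_finite_inter [T1Space X] (hK : IsKOmegaStructure K) {B : Set X}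
    (hB : ∀ n, (B ∩ K n).Finite) : IsClosed B := by
  refine (hK.2.2 B).2 fun n => ?_
  have hrestrict : ((↑) : K n → X) ⁻¹' B = (↑) ⁻¹' (B ∩ K n) := by
    ext x
    simp
  rw [hrestrict]
  exact (hB n).isClosed.preimage continuous_subtype_val

theorem exists_subset_accumulate_of_isCompact [T1Space X] (hK : IsKOmegaStructure K)
    {C : Set X} (hC : IsCompact C) : ∃ n, C ⊆ accumulate K n := by
  by_contra! h
  choose y hyC hy using fun n => not_subset.1 (h n)
  have hfin : ∀ B ⊆ range y, ∀ n, (B ∩ K n).Finite := by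
    intro B hB n
    refine ((finite_Iio n).image y).subset ?_
    rintro _ ⟨hzB, hzK⟩
    obtain ⟨m, rfl⟩ := hB hzB
    exact ⟨m, lt_of_not_ge fun hnm => hy m (monotone_accumulate hnm (subset_accumulate hzK)), rfl⟩
  have hclosed : ∀ B ⊆ range y, IsClosed B := fun B hB =>
    hK.isClosed_of_forall_finite_inter (hfin B hB)
  have hdisc : IsDiscrete (range y) := isDiscrete_iff_forall_mem_exists_isClosed.2 fun B hB =>
    ⟨B, hclosed B hB, inter_eq_left.2 hB⟩
  have hfinite : (range y).Finite :=
    (hC.of_isClosed_subset (hclosed _ subset_rfl) (range_subset_iff.2 hyC)).finite hdisc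
  obtain ⟨N, hN⟩ := hK.exists_subset_accumulate_of_finite hfinite
  exact hy N (hN (mem_range_self N))

end IsKOmegaStructure

theorem stmt4_general {X Y : Type*} [TopologicalSpace X] [TopologicalSpace Y] [T2Space Y]
    (q : X → Y) (hq : IsQuotientMap q) (hX : ∃ K : ℕ → Set X, IsKOmegaStructure K) :
    IsCompactCoverMap q := by
  obtain ⟨K, hK⟩ := hX
  refine ⟨hq.continuous, hq.surjective, fun C hC => ?_⟩
  obtain ⟨n, hn⟩ := (hK.image_of_isQuotientMap hq).exists_subset_accumulate_of_isCompact hC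
  rw [← image_accumulate] at hn
  refine ⟨accumulate K n ∩ q ⁻¹' C,
    (hK.isCompact_accumulate n).inter_right (hC.isClosed.preimage hq.continuous), ?_⟩
  rw [image_inter_preimage, inter_eq_right.2 hn]

theorem stmt4 {X Y : Type*} [TopologicalSpace X] [TopologicalSpace Y] [T2Space X] [T2Space Y]
    (q : X → Y) (hq : IsQuotientMap q) (hX : ∃ K : ℕ → Set X, IsKOmegaStructure K) :
    IsCompactCoverMap q :=
  stmt4_general q hq hX
end

section
/- The product of two k_ω-spaces, with the product topology, is a k_ω-space; moreover if {K_n} and {L_n} are towered k_ω-structures of X and Y respectively, then {K_n × L_n} is a k_ω-structure of X × Y. -/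
open Set Topology

/-- Dependent-choice style sequence construction. -/
lemma komega_seq_exists {α : Type*} (G : ℕ → α → Prop) (R : ℕ → α → α → Prop)
    (h0 : ∃ x, G 0 x) (hstep : ∀ n x, G n x → ∃ y, G (n + 1) y ∧ R n x y) :
    ∃ f : ℕ → α, (∀ n, G n (f n)) ∧ ∀ n, R n (f n) (f (n + 1)) := by
  classical
  let f : ℕ → α := fun n => Nat.rec (Classical.choose h0)
    (fun n x => if h : G n x then Classical.choose (hstep n x h) else x) n
  have hstep' : ∀ n, f (n + 1) = if h : G n (f n) then Classical.choose (hstep n (f n) h)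
      else f n := fun n => rfl
  have hG : ∀ n, G n (f n) := by
    intro n
    induction n with
    | zero => exact Classical.choose_spec h0
    | succ n ih =>
        rw [hstep' n, dif_pos ih]
        exact (Classical.choose_spec (hstep n (f n) ih)).1
  refine ⟨f, hG, fun n => ?_⟩
  rw [hstep' n, dif_pos (hG n)]
  exact (Classical.choose_spec (hstep n (f n) (hG n))).2

/-- The key separation step. -/
lemma komega_key {X Y : Type*} [TopologicalSpace X] [TopologicalSpace Y]
    [T2Space X] [T2Space Y] {F : Set (X × Y)} {K' : Set X} {L' : Set Y}
    (hK' : IsCompact K') (hL' : IsCompact L')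
    (hF : IsClosed (F ∩ K' ×ˢ L')) {A : Set X} {B : Set Y}
    (hA : IsCompact A) (hB : IsCompact B) (hAK : A ⊆ K') (hBL : B ⊆ L')
    (hdis : Disjoint (A ×ˢ B) F) :
    ∃ O P, IsOpen O ∧ IsOpen P ∧ A ⊆ O ∧ B ⊆ P ∧
      Disjoint (closure (O ∩ K') ×ˢ closure (P ∩ L')) F := by
  have hW : IsOpen (F ∩ K' ×ˢ L')ᶜ := hF.isOpen_compl
  have hsub : A ×ˢ B ⊆ (F ∩ K' ×ˢ L')ᶜ := by
    intro z hz hzF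
    exact hdis.le_bot ⟨hz, hzF.1⟩
  obtain ⟨O1, P1, hO1, hP1, hAO1, hBP1, htube⟩ := generalized_tube_lemma hA hB hW hsub
  -- separate A from K' \ O1
  obtain ⟨O, O2, hO, hO2, hAO, hCO2, hOO2⟩ :=
    SeparatedNhds.of_isCompact_isCompact hA (hK'.diff hO1)
      (disjoint_left.2 fun x hx hx' => hx'.2 (hAO1 hx))
  obtain ⟨P, P2, hP, hP2, hBP, hDP2, hPP2⟩ :=
    SeparatedNhds.of_isCompact_isCompact hB (hL'.diff hP1)
      (disjoint_left.2 fun y hy hy' => hy'.2 (hBP1 hy))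
  refine ⟨O, P, hO, hP, hAO, hBP, ?_⟩
  have hOc : closure (O ∩ K') ⊆ O1 ∩ K' := by
    have h1 : O ∩ K' ⊆ O2ᶜ ∩ K' :=
      inter_subset_inter_left _ (subset_compl_iff_disjoint_right.2 hOO2)
    have h2 : IsClosed (O2ᶜ ∩ K') := (isClosed_compl_iff.2 hO2).inter hK'.isClosed
    refine (closure_minimal h1 h2).trans ?_
    intro x hx
    refine ⟨?_, hx.2⟩
    by_contra hxO1
    exact hx.1 (hCO2 ⟨hx.2, hxO1⟩)
  have hPc : closure (P ∩ L') ⊆ P1 ∩ L' := by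
    have h1 : P ∩ L' ⊆ P2ᶜ ∩ L' :=
      inter_subset_inter_left _ (subset_compl_iff_disjoint_right.2 hPP2)
    have h2 : IsClosed (P2ᶜ ∩ L') := (isClosed_compl_iff.2 hP2).inter hL'.isClosed
    refine (closure_minimal h1 h2).trans ?_
    intro y hy
    refine ⟨?_, hy.2⟩
    by_contra hyP1
    exact hy.1 (hDP2 ⟨hy.2, hyP1⟩)
  refine disjoint_left.2 fun z hz hzF => ?_
  have h1 := hOc hz.1
  have h2 := hPc hz.2
  exact htube ⟨h1.1, h2.1⟩ ⟨hzF, h1.2, h2.2⟩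

theorem stmt7 {X Y : Type*} [TopologicalSpace X] [TopologicalSpace Y] [T2Space X] [T2Space Y]
    (K : ℕ → Set X) (L : ℕ → Set Y)
    (hK : IsKOmegaStructure K) (hL : IsKOmegaStructure L)
    (hKt : ∀ n, K n ⊆ K (n + 1)) (hLt : ∀ n, L n ⊆ L (n + 1)) :
    IsKOmegaStructure (fun n => K n ×ˢ L n) := by
  classical
  obtain ⟨hKc, hKu, hKcl⟩ := hK
  obtain ⟨hLc, hLu, hLcl⟩ := hL
  have Kmono : Monotone K := monotone_nat_of_le_succ hKt
  have Lmono : Monotone L := monotone_nat_of_le_succ hLt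
  have hKclosed : ∀ n, IsClosed (K n) := fun n => (hKc n).isClosed
  have hLclosed : ∀ n, IsClosed (L n) := fun n => (hLc n).isClosed
  refine ⟨fun n => (hKc n).prod (hLc n), ?_, fun F => ⟨fun hF n => hF.preimage
    continuous_subtype_val, fun hF => ?_⟩⟩
  · ext ⟨x, y⟩
    simp only [mem_iUnion, mem_prod, mem_univ, iff_true]
    have hx : x ∈ ⋃ n, K n := hKu ▸ mem_univ x
    have hy : y ∈ ⋃ n, L n := hLu ▸ mem_univ y
    obtain ⟨i, hi⟩ := mem_iUnion.1 hx
    obtain ⟨j, hj⟩ := mem_iUnion.1 hy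
    exact ⟨max i j, Kmono (le_max_left i j) hi, Lmono (le_max_right i j) hj⟩
  -- hard direction
  have hF' : ∀ n, IsClosed (F ∩ K n ×ˢ L n) := by
    intro n
    have hcl : IsClosed (K n ×ˢ L n) := (hKclosed n).prod (hLclosed n)
    have := hcl.isClosedEmbedding_subtypeVal.isClosed_iff_image_isClosed.1 (hF n)
    rwa [Subtype.image_preimage_coe, inter_comm] at this
  rw [← isOpen_compl_iff]
  rw [isOpen_iff_forall_mem_open]
  rintro ⟨a, b⟩ hab
  obtain ⟨Na, hNa⟩ := mem_iUnion.1 (hKu ▸ mem_univ a)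
  obtain ⟨Nb, hNb⟩ := mem_iUnion.1 (hLu ▸ mem_univ b)
  set N := max Na Nb with hN
  have haN : a ∈ K N := Kmono (le_max_left _ _) hNa
  have hbN : b ∈ L N := Lmono (le_max_right _ _) hNb
  -- the inductive construction
  set G : ℕ → Set X × Set Y → Prop := fun n p =>
    (∃ O, IsOpen O ∧ p.1 = O ∩ K (N + n)) ∧ (∃ P, IsOpen P ∧ p.2 = P ∩ L (N + n)) ∧
      a ∈ p.1 ∧ b ∈ p.2 ∧ Disjoint (closure p.1 ×ˢ closure p.2) F with hG
  have hbase : ∃ p, G 0 p := by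
    obtain ⟨O, P, hO, hP, haO, hbP, hdis⟩ := komega_key (hKc N) (hLc N) (hF' N)
      isCompact_singleton isCompact_singleton (singleton_subset_iff.2 haN)
      (singleton_subset_iff.2 hbN)
      (disjoint_left.2 (by rintro z ⟨rfl, rfl⟩ h; exact hab h))
    exact ⟨(O ∩ K (N + 0), P ∩ L (N + 0)), ⟨O, hO, rfl⟩, ⟨P, hP, rfl⟩,
      ⟨singleton_subset_iff.1 haO, haN⟩, ⟨singleton_subset_iff.1 hbP, hbN⟩, hdis⟩
  have hstep : ∀ n p, G n p → ∃ q, G (n + 1) q ∧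
      (closure p.1 ⊆ q.1 ∧ closure p.2 ⊆ q.2) := by
    rintro n ⟨U, V⟩ ⟨⟨O0, hO0, hU⟩, ⟨P0, hP0, hV⟩, haU, hbV, hdis⟩
    dsimp only at hU hV haU hbV hdis ⊢
    have haK : a ∈ K (N + n) := by rw [hU] at haU; exact haU.2
    have hbL : b ∈ L (N + n) := by rw [hV] at hbV; exact hbV.2
    have hUK : closure U ⊆ K (N + n) := by
      rw [hU]; exact closure_minimal inter_subset_right (hKclosed _)
    have hVL : closure V ⊆ L (N + n) := by
      rw [hV]; exact closure_minimal inter_subset_right (hLclosed _)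
    have hUK' : closure U ⊆ K (N + (n + 1)) := hUK.trans (Kmono (by omega))
    have hVL' : closure V ⊆ L (N + (n + 1)) := hVL.trans (Lmono (by omega))
    have hUc : IsCompact (closure U) := (hKc (N + n)).of_isClosed_subset isClosed_closure hUK
    have hVc : IsCompact (closure V) := (hLc (N + n)).of_isClosed_subset isClosed_closure hVL
    obtain ⟨O, P, hO, hP, hAO, hBP, hdis'⟩ := komega_key (hKc (N + (n + 1)))
      (hLc (N + (n + 1))) (hF' (N + (n + 1))) hUc hVc hUK' hVL' hdis
    exact ⟨(O ∩ K (N + (n + 1)), P ∩ L (N + (n + 1))), ⟨⟨O, hO, rfl⟩, ⟨P, hP, rfl⟩,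
      ⟨hAO (subset_closure haU), Kmono (by omega) haK⟩,
      ⟨hBP (subset_closure hbV), Lmono (by omega) hbL⟩, hdis'⟩,
      subset_inter hAO hUK', subset_inter hBP hVL'⟩
  obtain ⟨f, hGf, hRf⟩ := komega_seq_exists G _ hbase hstep
  choose O hOopen hOeq using fun n => (hGf n).1
  choose P hPopen hPeq using fun n => (hGf n).2.1
  have hfa : ∀ n, a ∈ (f n).1 := fun n => (hGf n).2.2.1
  have hfb : ∀ n, b ∈ (f n).2 := fun n => (hGf n).2.2.2.1
  have hfdis : ∀ n, Disjoint (closure (f n).1 ×ˢ closure (f n).2) F :=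
    fun n => (hGf n).2.2.2.2
  have hUmono : Monotone fun n => (f n).1 :=
    monotone_nat_of_le_succ fun n => subset_closure.trans (hRf n).1
  have hVmono : Monotone fun n => (f n).2 :=
    monotone_nat_of_le_succ fun n => subset_closure.trans (hRf n).2
  set U : Set X := ⋃ n, (f n).1 with hUdef
  set V : Set Y := ⋃ n, (f n).2 with hVdef
  have hUopen : IsOpen U := by
    rw [← isClosed_compl_iff, hKcl]
    intro m
    rw [preimage_compl, ← isOpen_compl_iff, compl_compl]
    have : (Subtype.val ⁻¹' U : Set (K m)) = Subtype.val ⁻¹' ⋃ n, O (n + m) := by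
      ext ⟨x, hx⟩
      simp only [mem_preimage, hUdef, mem_iUnion]
      constructor
      · rintro ⟨j, hj⟩
        have : x ∈ (f (j + m)).1 := hUmono (Nat.le_add_right j m) hj
        rw [hOeq] at this
        exact ⟨j, this.1⟩
      · rintro ⟨j, hj⟩
        refine ⟨j + m, ?_⟩
        rw [hOeq]
        exact ⟨hj, Kmono (by omega) hx⟩
    rw [this]
    exact (isOpen_iUnion fun n => hOopen (n + m)).preimage continuous_subtype_val
  have hVopen : IsOpen V := by
    rw [← isClosed_compl_iff, hLcl]
    intro m
    rw [preimage_compl, ← isOpen_compl_iff, compl_compl]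
    have : (Subtype.val ⁻¹' V : Set (L m)) = Subtype.val ⁻¹' ⋃ n, P (n + m) := by
      ext ⟨y, hy⟩
      simp only [mem_preimage, hVdef, mem_iUnion]
      constructor
      · rintro ⟨j, hj⟩
        have : y ∈ (f (j + m)).2 := hVmono (Nat.le_add_right j m) hj
        rw [hPeq] at this
        exact ⟨j, this.1⟩
      · rintro ⟨j, hj⟩
        refine ⟨j + m, ?_⟩
        rw [hPeq]
        exact ⟨hj, Lmono (by omega) hy⟩
    rw [this]
    exact (isOpen_iUnion fun n => hPopen (n + m)).preimage continuous_subtype_val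
  refine ⟨U ×ˢ V, ?_, hUopen.prod hVopen, ⟨mem_iUnion.2 ⟨0, hfa 0⟩, mem_iUnion.2 ⟨0, hfb 0⟩⟩⟩
  rintro ⟨x, y⟩ ⟨hx, hy⟩ hxyF
  obtain ⟨i, hi⟩ := mem_iUnion.1 hx
  obtain ⟨j, hj⟩ := mem_iUnion.1 hy
  have hxi : x ∈ closure (f (max i j)).1 := subset_closure (hUmono (le_max_left i j) hi)
  have hyj : y ∈ closure (f (max i j)).2 := subset_closure (hVmono (le_max_right i j) hj)
  exact (hfdis (max i j)).le_bot ⟨⟨hxi, hyj⟩, hxyF⟩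
end

section
/- Let {X_n : n ∈ ℕ} be a sequence of T₁ normal topological spaces with X_n a closed subspace of X_{n+1} for every n. Then the colimit X = colim_n X_n (whose underlying set is ⋃ X_n, with A closed iff A ∩ X_n closed in X_n for all n) is a T₁ normal space. -/
open Set Topology

/-!
Singletons are closed because closedness is tested on the pieces `A n`. For normality, given
disjoint closed `E` and `F`, build a Urysohn function piece by piece: one on `A n`, glued with the
constants `0` on `E` and `1` on `F`, is continuous on the closed subset `A n ∪ E ∪ F` of
`A (n + 1)`, and Tietze extends it to `A (n + 1)`. The compatible sequence glues to a function on
`X` that is continuous on every piece, hence continuous.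
-/

open Function

universe u v

theorem exists_seq_of_exists_succ {α : Type*} {P : ℕ → α → Prop} {R : ℕ → α → α → Prop}
    (h0 : ∃ a, P 0 a) (hsucc : ∀ n a, P n a → ∃ b, P (n + 1) b ∧ R n a b) :
    ∃ f : ℕ → α, ∀ n, P n (f n) ∧ R n (f n) (f (n + 1)) := by
  choose next hnextP hnextR using hsucc
  obtain ⟨a, ha⟩ := h0
  let f : ∀ n, {a // P n a} := fun n =>
    Nat.rec ⟨a, ha⟩ (fun n b => ⟨next n b.1 b.2, hnextP n b.1 b.2⟩) n
  exact ⟨fun n => (f n).1, fun n => ⟨(f n).2, hnextR n _ _⟩⟩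

section Coherent

variable {ι X Y : Type*} [TopologicalSpace X] [TopologicalSpace Y] {A : ι → Set X}

theorem t1Space_of_coherent [∀ i, T1Space (A i)]
    (hA : ∀ F : Set X, (∀ i, IsClosed (((↑) : A i → X) ⁻¹' F)) → IsClosed F) : T1Space X :=
  ⟨fun _ => hA _ fun _ => (subsingleton_singleton.preimage Subtype.val_injective).isClosed⟩

theorem continuous_of_coherent
    (hA : ∀ F : Set X, (∀ i, IsClosed (((↑) : A i → X) ⁻¹' F)) → IsClosed F)
    {f : X → Y} (hf : ∀ i, ContinuousOn f (A i)) : Continuous f :=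
  continuous_iff_isClosed.2 fun _ hC => hA _ fun i => hC.preimage (hf i).domRestrict

end Coherent

theorem exists_eqOn_of_eqOn_succ {X Y : Type*} {A : ℕ → Set X} (hmono : Monotone A)
    (hunion : ⋃ n, A n = univ) {f : ℕ → X → Y} (hf : ∀ n, EqOn (f (n + 1)) (f n) (A n)) :
    ∃ φ : X → Y, ∀ n, EqOn φ (f n) (A n) := by
  have hle : ∀ n m, n ≤ m → EqOn (f m) (f n) (A n) := by
    intro n m hnm
    induction m, hnm using Nat.le_induction with
    | base => exact eqOn_refl _ _
    | succ m hnm ih => exact ((hf m).mono (hmono hnm)).trans ih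
  choose idx hidx using fun x => mem_iUnion.1 (hunion ▸ mem_univ x)
  refine ⟨fun x => f (idx x) x, fun n x hx => ?_⟩
  rcases le_total n (idx x) with h | h
  · exact hle n _ h hx
  · exact (hle _ n h (hidx x)).symm

theorem ContinuousOn.exists_continuous_eqOn {Z : Type u} [TopologicalSpace Z] [NormalSpace Z]
    {Y : Type v} [TopologicalSpace Y] [TietzeExtension.{u, v} Y] {s : Set Z} (hs : IsClosed s)
    {f : Z → Y} (hf : ContinuousOn f s) : ∃ g : C(Z, Y), EqOn g f s := by
  obtain ⟨g, hg⟩ := ContinuousMap.exists_restrict_eq hs ⟨_, hf.domRestrict⟩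
  exact ⟨g, fun x hx => congr($hg ⟨x, hx⟩)⟩

section Urysohn

variable {X : Type*} [TopologicalSpace X]

def IsUrysohnOn (s E F : Set X) (f : X → ℝ) : Prop :=
  ContinuousOn f s ∧ EqOn f 0 (s ∩ E) ∧ EqOn f 1 (s ∩ F)

theorem isUrysohnOn_empty (E F : Set X) (f : X → ℝ) : IsUrysohnOn ∅ E F f := by
  simp [IsUrysohnOn]

theorem IsUrysohnOn.congr {s E F : Set X} {f g : X → ℝ} (hf : IsUrysohnOn s E F f)
    (hfg : EqOn g f s) : IsUrysohnOn s E F g :=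
  ⟨hf.1.congr hfg, fun _ hx => (hfg hx.1).trans (hf.2.1 hx),
    fun _ hx => (hfg hx.1).trans (hf.2.2 hx)⟩

theorem IsUrysohnOn.separatedNhds {E F : Set X} {f : X → ℝ} (hf : IsUrysohnOn univ E F f) :
    SeparatedNhds E F :=
  ((normal_separation isClosed_singleton isClosed_singleton
      (disjoint_singleton.2 zero_ne_one)).preimage (continuousOn_univ.1 hf.1)).mono
    (fun x hx => hf.2.1 ⟨mem_univ x, hx⟩) (fun x hx => hf.2.2 ⟨mem_univ x, hx⟩)

theorem IsUrysohnOn.exists_continuous_eqOn [NormalSpace X] {S E F : Set X} (hS : IsClosed S)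
    (hE : IsClosed E) (hF : IsClosed F) (hEF : Disjoint E F) {f : X → ℝ}
    (hf : IsUrysohnOn S E F f) : ∃ g : C(X, ℝ), IsUrysohnOn univ E F g ∧ EqOn g f S := by
  classical
  set h := S.piecewise f (E.piecewise 0 1)
  have hhS : EqOn h f S := fun x hx => piecewise_eq_of_mem _ _ _ hx
  have hhE : EqOn h 0 E := fun x hx => by
    by_cases hxS : x ∈ S
    · exact (hhS hxS).trans (hf.2.1 ⟨hxS, hx⟩)
    · simp [h, hxS, hx]
  have hhF : EqOn h 1 F := fun x hx => by
    by_cases hxS : x ∈ S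
    · exact (hhS hxS).trans (hf.2.2 ⟨hxS, hx⟩)
    · simp [h, hxS, hEF.notMem_of_mem_right hx]
  have hcont : ContinuousOn h (S ∪ E ∪ F) :=
    ((hf.1.congr hhS).union_of_isClosed (continuousOn_const.congr hhE) hS hE).union_of_isClosed
      (continuousOn_const.congr hhF) (hS.union hE) hF
  obtain ⟨g, hg⟩ := hcont.exists_continuous_eqOn ((hS.union hE).union hF)
  refine ⟨g, ⟨g.continuous.continuousOn, fun x hx => ?_, fun x hx => ?_⟩, fun x hx => ?_⟩
  · exact (hg (Or.inl (Or.inr hx.2))).trans (hhE hx.2)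
  · exact (hg (Or.inr hx.2)).trans (hhF hx.2)
  · exact (hg (Or.inl (Or.inl hx))).trans (hhS hx)

theorem IsUrysohnOn.exists_extension {s t E F : Set X} [NormalSpace t]
    (hs : IsClosed (((↑) : t → X) ⁻¹' s)) (hE : IsClosed E) (hF : IsClosed F)
    (hEF : Disjoint E F) {f : X → ℝ} (hf : IsUrysohnOn s E F f) :
    ∃ g : X → ℝ, IsUrysohnOn t E F g ∧ EqOn g f s := by
  have hft : IsUrysohnOn (((↑) : t → X) ⁻¹' s) (((↑) : t → X) ⁻¹' E) (((↑) : t → X) ⁻¹' F)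
      (f ∘ (↑)) :=
    ⟨hf.1.comp continuous_subtype_val.continuousOn fun _ hx => hx,
      fun x hx => hf.2.1 hx, fun x hx => hf.2.2 hx⟩
  obtain ⟨g, hgU, hgf⟩ := hft.exists_continuous_eqOn hs (hE.preimage continuous_subtype_val)
    (hF.preimage continuous_subtype_val) (hEF.preimage _)
  have hext : ∀ x : t, extend (↑) g f x = g x := Subtype.val_injective.extend_apply _ _
  refine ⟨extend (↑) g f, ⟨?_, fun x hx => ?_, fun x hx => ?_⟩, fun x hx => ?_⟩
  · rw [continuousOn_iff_continuous_domRestrict]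
    convert g.continuous
    exact funext hext
  · exact (hext ⟨x, hx.1⟩).trans (hgU.2.1 ⟨mem_univ _, hx.2⟩)
  · exact (hext ⟨x, hx.1⟩).trans (hgU.2.2 ⟨mem_univ _, hx.2⟩)
  · by_cases hxt : x ∈ t
    · exact (hext ⟨x, hxt⟩).trans (hgf hx)
    · exact extend_apply' _ _ _ fun ⟨y, hy⟩ => hxt (hy ▸ y.2)

end Urysohn

theorem normalSpace_of_coherent_seq {X : Type*} [TopologicalSpace X] {A : ℕ → Set X}
    [∀ n, NormalSpace (A n)] (hmono : ∀ n, A n ⊆ A (n + 1)) (hunion : ⋃ n, A n = univ)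
    (hclosed : ∀ n, IsClosed (((↑) : A (n + 1) → X) ⁻¹' A n))
    (hA : ∀ F : Set X, (∀ n, IsClosed (((↑) : A n → X) ⁻¹' F)) → IsClosed F) :
    NormalSpace X := by
  refine ⟨fun E F hE hF hEF => ?_⟩
  obtain ⟨f, hf⟩ := exists_seq_of_exists_succ (P := fun n => IsUrysohnOn (A n) E F)
    (R := fun n f g => EqOn g f (A n))
    -- the base case is the extension step from the empty set
    (((isUrysohnOn_empty E F 0).exists_extension (by simp) hE hF hEF).imp fun _ hg => hg.1)
    (fun n _ hg => hg.exists_extension (hclosed n) hE hF hEF)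
  obtain ⟨φ, hφ⟩ := exists_eqOn_of_eqOn_succ (monotone_nat_of_le_succ hmono) hunion
    fun n => (hf n).2
  have hφU : ∀ n, IsUrysohnOn (A n) E F φ := fun n => (hf n).1.congr (hφ n)
  have hmem : ∀ x, ∃ n, x ∈ A n := fun x => mem_iUnion.1 (hunion ▸ mem_univ x)
  refine IsUrysohnOn.separatedNhds ⟨(continuous_of_coherent hA fun n => (hφU n).1).continuousOn,
    fun x hx => ?_, fun x hx => ?_⟩
  · obtain ⟨n, hn⟩ := hmem x
    exact (hφU n).2.1 ⟨hn, hx.2⟩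
  · obtain ⟨n, hn⟩ := hmem x
    exact (hφU n).2.2 ⟨hn, hx.2⟩

theorem stmt8 {X : Type*} [TopologicalSpace X] (A : ℕ → Set X)
    (hmono : ∀ n, A n ⊆ A (n + 1)) (hunion : (⋃ n, A n) = Set.univ)
    (hT1 : ∀ n, T1Space (A n)) (hnorm : ∀ n, NormalSpace (A n))
    (hclosedsucc : ∀ n, IsClosed (((↑) : A (n + 1) → X) ⁻¹' (A n)))
    (hcolim : ∀ F : Set X, IsClosed F ↔ ∀ n, IsClosed (((↑) : A n → X) ⁻¹' F)) :
    T1Space X ∧ NormalSpace X :=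
  ⟨t1Space_of_coherent fun F => (hcolim F).2,
    normalSpace_of_coherent_seq hmono hunion hclosedsucc fun F => (hcolim F).2⟩
end

section
/- Let X be the wedge at 0 of copies of ℝ indexed by all infinite sequences s of positive integers (with the quotient topology from ⨿_s ℝ_s), and Y the wedge at 0 of copies of ℝ indexed by the positive integers. Let P = { (p_s(1/s_j), q_j(1/s_j)) : s ∈ (ℤ⁺)^ℕ, j ∈ ℤ⁺ } ⊆ X × Y, where p_s : ℝ → X and q_j : ℝ → Y are the canonical maps. Then the point (0_X, 0_Y) lies in the closure of P in the product topology X × Y, but (0_X, 0_Y) ∉ P. -/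
open Set Topology

/-- The relation identifying the origins of all copies of `ℝ` in the disjoint union. -/
def wedgeRel (I : Type*) (a b : Σ _ : I, ℝ) : Prop := a.2 = 0 ∧ b.2 = 0

/-- The wedge at `0` of copies of `ℝ` indexed by `I`, with the quotient topology. -/
def Wedge (I : Type*) : Type _ := Quot (wedgeRel I)

instance (I : Type*) : TopologicalSpace (Wedge I) :=
  inferInstanceAs (TopologicalSpace (Quot (wedgeRel I)))

/-- The canonical map from the `i`-th copy of `ℝ` into the wedge. -/
def wedgePt {I : Type*} (i : I) (x : ℝ) : Wedge I := Quot.mk _ ⟨i, x⟩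

/-- The set `P = {(p_s(1/s_j), q_j(1/s_j))}` in `X × Y`. -/
def Pset : Set (Wedge (ℕ+ → ℕ+) × Wedge ℕ+) :=
  {p | ∃ (s : ℕ+ → ℕ+) (j : ℕ+),
    p = (wedgePt s (1 / ((s j : ℕ) : ℝ)), wedgePt j (1 / ((s j : ℕ) : ℝ)))}

/-- The absolute value of the real coordinate is well defined on the wedge. -/
def wedgeVal {I : Type*} : Wedge I → ℝ :=
  Quot.lift (fun a => a.2) (by rintro a b ⟨ha, hb⟩; simp [ha, hb])

lemma wedge_zero {I : Type*} (i i' : I) : wedgePt i (0:ℝ) = wedgePt i' 0 :=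
  Quot.sound ⟨rfl, rfl⟩

lemma slice_open {I : Type*} {U : Set (Wedge I)} (hU : IsOpen U) (i : I) :
    IsOpen {x : ℝ | wedgePt i x ∈ U} := by
  have h : IsOpen (Quot.mk (wedgeRel I) ⁻¹' U) := hU
  have := (isOpen_sigma_iff.mp h) i
  exact this

theorem stmt12 :
    (wedgePt (fun _ => 1) (0 : ℝ), wedgePt (1 : ℕ+) (0 : ℝ)) ∈ closure Pset ∧
      (wedgePt (fun _ => 1) (0 : ℝ), wedgePt (1 : ℕ+) (0 : ℝ)) ∉ Pset := by
  constructor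
  · rw [mem_closure_iff]
    intro U hU hmem
    obtain ⟨U1, U2, h1, h2, hx, hy, hsub⟩ := isOpen_prod_iff.mp hU _ _ hmem
    -- for each j, choose s j ≥ j with wedgePt j (1/(s j)) ∈ U2
    have hchoice : ∀ j : ℕ+, ∃ n : ℕ+, (j : ℕ) ≤ (n : ℕ) ∧
        wedgePt j (1 / ((n : ℕ) : ℝ)) ∈ U2 := by
      intro j
      have hs := slice_open h2 j
      obtain ⟨ε, hε, hball⟩ := Metric.isOpen_iff.mp hs 0 (by show wedgePt j (0:ℝ) ∈ U2; rwa [wedge_zero j 1])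
      obtain ⟨N, hN⟩ := exists_nat_gt (max ((j : ℕ) : ℝ) ε⁻¹)
      have hN1 : (j : ℕ) ≤ N := by
        have := lt_of_le_of_lt (le_max_left _ _) hN
        exact_mod_cast this.le
      refine ⟨⟨N, Nat.pos_of_ne_zero ?_⟩, hN1, ?_⟩
      · intro h; subst h; have := j.pos; omega
      · apply hball
        simp only [Metric.mem_ball, Real.dist_eq, sub_zero]
        show |(1:ℝ) / (N:ℝ)| < ε
        have hNR : (ε⁻¹ : ℝ) < N := lt_of_le_of_lt (le_max_right _ _) hN
        have hNpos' : (0:ℝ) < N := lt_of_le_of_lt (inv_nonneg.mpr hε.le) hNR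
        rw [abs_of_pos (by positivity)]
        rw [div_lt_iff₀ hNpos']
        calc (1:ℝ) = ε * ε⁻¹ := by field_simp
        _ < ε * N := by exact mul_lt_mul_of_pos_left hNR hε
    choose s hs1 hs2 using hchoice
    -- now choose j large
    have hsX := slice_open h1 s
    obtain ⟨ε, hε, hball⟩ := Metric.isOpen_iff.mp hsX 0 (by show wedgePt s (0:ℝ) ∈ U1; rwa [wedge_zero s fun _ => 1])
    obtain ⟨N, hN⟩ := exists_nat_gt ε⁻¹
    have hNpos : 0 < N + 1 := Nat.succ_pos N
    set j : ℕ+ := ⟨N + 1, hNpos⟩ with hj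
    have hjs : (ε⁻¹ : ℝ) < ((s j : ℕ) : ℝ) := by
      have : (N + 1 : ℕ) ≤ (s j : ℕ) := hs1 j
      calc (ε⁻¹ : ℝ) < N := hN
      _ ≤ ((s j : ℕ) : ℝ) := by exact_mod_cast le_trans (Nat.le_succ N) this
    have hpos : (0:ℝ) < ((s j : ℕ) : ℝ) := lt_of_le_of_lt (inv_nonneg.mpr hε.le) hjs
    have hXmem : wedgePt s (1 / ((s j : ℕ) : ℝ)) ∈ U1 := by
      apply hball
      simp only [Metric.mem_ball, Real.dist_eq, sub_zero]
      rw [abs_of_pos (by positivity), div_lt_iff₀ hpos]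
      calc (1:ℝ) = ε * ε⁻¹ := by field_simp
      _ < ε * _ := mul_lt_mul_of_pos_left hjs hε
    exact ⟨_, hsub ⟨hXmem, hs2 j⟩, ⟨s, j, rfl⟩⟩
  · rintro ⟨s, j, h⟩
    have h1 : wedgePt (fun _ => (1:ℕ+)) (0:ℝ) = wedgePt s (1 / ((s j : ℕ) : ℝ)) :=
      congrArg Prod.fst h
    have := congrArg wedgeVal h1
    simp only [wedgePt, wedgeVal] at this
    have hpos : (0:ℝ) < ((s j : ℕ) : ℝ) := by exact_mod_cast (s j).pos
    rw [eq_comm, div_eq_zero_iff] at this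
    rcases this with h' | h'
    · exact one_ne_zero h'
    · exact hpos.ne' h'
end

section
/- With X, Y, and P as above, P is closed in the quotient topology on X × Y induced by the map (⨿_s ℝ_s) × (⨿_j ℝ_j) → X × Y. Consequently, the quotient topology on X × Y induced by this map is strictly finer than the product topology of the quotient topologies on X and Y. -/
open Set Topology

/-- The product of the two quotient maps from the disjoint unions. -/
def qmap : (Σ _ : ℕ+ → ℕ+, ℝ) × (Σ _ : ℕ+, ℝ) → Wedge (ℕ+ → ℕ+) × Wedge ℕ+ :=
  Prod.map (Quot.mk _) (Quot.mk _)

/-- The quotient topology on `X × Y` induced by `qmap`. -/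
def tQ : TopologicalSpace (Wedge (ℕ+ → ℕ+) × Wedge ℕ+) :=
  TopologicalSpace.coinduced qmap inferInstance

/-!
In each chart `ℝ_s × ℝ_j` of the disjoint union of products, `P` pulls back to the single
point `(1/s_j, 1/s_j)`, so `P` is closed in the quotient topology. In the product topology,
however, the basepoint lies in the closure of `P`: a basic neighbourhood `U × V` contains an
initial segment `[0, ε_j)` of every arm `ℝ_j` of `Y`; a diagonal choice of `s` with
`1/s_j < ε_j` and `s_j ≥ j` makes `U` contain `1/s_j` on the arm `ℝ_s` of `X` for all
large `j`.
-/

open Filter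

section Wedge

variable {I : Type*}

theorem wedgePt_eq_wedgePt_iff {i i' : I} {x x' : ℝ} :
    wedgePt i x = wedgePt i' x' ↔ (i = i' ∧ x = x') ∨ (x = 0 ∧ x' = 0) := by
  let r (a b : Σ _ : I, ℝ) : Prop := a = b ∨ (a.2 = 0 ∧ b.2 = 0)
  have hr : Equivalence r := by
    refine ⟨fun _ => .inl rfl, fun h => h.imp Eq.symm And.symm, ?_⟩
    rintro a b c (rfl | ⟨ha, hb⟩) (rfl | ⟨hb', hc⟩)
    exacts [.inl rfl, .inr ⟨hb', hc⟩, .inr ⟨ha, hb⟩, .inr ⟨ha, hc⟩]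
  have key : wedgePt i x = wedgePt i' x' ↔ r ⟨i, x⟩ ⟨i', x'⟩ := by
    refine ⟨fun h => hr.eqvGen_iff.mp (Relation.EqvGen.mono ?_ _ _ (Quot.eqvGen_exact h)), ?_⟩
    · exact fun a b h => .inr h
    · rintro (h | h)
      exacts [congrArg (Quot.mk _) h, Quot.sound h]
  simp [key, r]

theorem wedgePt_eq_wedgePt_iff_of_ne_zero {i i' : I} {x x' : ℝ} (hx' : x' ≠ 0) :
    wedgePt i x = wedgePt i' x' ↔ i = i' ∧ x = x' := by
  simp [wedgePt_eq_wedgePt_iff, hx']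

theorem wedgePt_zero (i i' : I) : wedgePt i 0 = wedgePt i' 0 :=
  wedgePt_eq_wedgePt_iff.mpr (.inr ⟨rfl, rfl⟩)

theorem continuous_wedgePt (i : I) : Continuous (wedgePt i) :=
  continuous_quot_mk.comp continuous_sigmaMk

theorem tendsto_wedgePt_inv_atTop (i : I) :
    Tendsto (fun n : ℕ+ => wedgePt i (1 / ((n : ℕ) : ℝ))) atTop (𝓝 (wedgePt i 0)) :=
  (continuous_wedgePt i).continuousAt.tendsto.comp
    (PNat.tendsto_comp_val_iff.mpr tendsto_one_div_atTop_nhds_zero_nat)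

end Wedge

section SigmaProd

variable {ι κ : Type*} {σ : ι → Type*} {τ : κ → Type*} [∀ i, TopologicalSpace (σ i)]
  [∀ k, TopologicalSpace (τ k)]

theorem isLocallyConstant_sigma_fst : IsLocallyConstant (Sigma.fst : (Σ i, σ i) → ι) :=
  IsLocallyConstant.iff_isOpen_fiber.mpr fun i => isOpen_sigma_fst_preimage {i}

theorem isLocallyConstant_prod_sigma_fst :
    IsLocallyConstant fun p : (Σ i, σ i) × (Σ k, τ k) => (p.1.1, p.2.1) :=
  (isLocallyConstant_sigma_fst.comp_continuous continuous_fst).prodMk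
    (isLocallyConstant_sigma_fst.comp_continuous continuous_snd)

end SigmaProd

theorem continuous_sigma_snd {ι X : Type*} [TopologicalSpace X] :
    Continuous fun x : Σ _ : ι, X => x.2 :=
  continuous_sigma fun _ => continuous_id

theorem one_div_pnat_ne_zero (n : ℕ+) : 1 / ((n : ℕ) : ℝ) ≠ 0 := by
  positivity

theorem preimage_qmap_Pset : qmap ⁻¹' Pset =
    {p | p.1.2 = 1 / ((p.1.1 p.2.1 : ℕ) : ℝ) ∧ p.2.2 = p.1.2} := by
  ext ⟨⟨s, x⟩, ⟨j, y⟩⟩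
  change (∃ s' j', (wedgePt s x, wedgePt j y) = _) ↔ _
  simp only [Prod.mk.injEq, wedgePt_eq_wedgePt_iff_of_ne_zero (one_div_pnat_ne_zero _)]
  constructor
  · rintro ⟨s, j, ⟨rfl, rfl⟩, ⟨rfl, rfl⟩⟩
    exact ⟨rfl, rfl⟩
  · rintro ⟨hx : x = _, hy : y = x⟩
    exact ⟨s, j, ⟨rfl, hx⟩, ⟨rfl, hy.trans hx⟩⟩

theorem isClosed_Pset : IsClosed[tQ] Pset := by
  rw [tQ, isClosed_coinduced, preimage_qmap_Pset]
  have hidx : Continuous fun p : (Σ _ : ℕ+ → ℕ+, ℝ) × (Σ _ : ℕ+, ℝ) =>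
      1 / ((p.1.1 p.2.1 : ℕ) : ℝ) :=
    (isLocallyConstant_prod_sigma_fst.comp fun ij : (ℕ+ → ℕ+) × ℕ+ =>
      1 / ((ij.1 ij.2 : ℕ) : ℝ)).continuous
  have hx : Continuous fun p : (Σ _ : ℕ+ → ℕ+, ℝ) × (Σ _ : ℕ+, ℝ) => p.1.2 :=
    continuous_sigma_snd.comp continuous_fst
  have hy : Continuous fun p : (Σ _ : ℕ+ → ℕ+, ℝ) × (Σ _ : ℕ+, ℝ) => p.2.2 :=
    continuous_sigma_snd.comp continuous_snd
  exact (isClosed_eq hx hidx).inter (isClosed_eq hy hx)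

theorem basepoint_mem_closure_Pset :
    (wedgePt (1 : ℕ+ → ℕ+) 0, wedgePt (1 : ℕ+) 0) ∈ closure Pset := by
  rw [mem_closure_iff_nhds]
  intro t ht
  rw [nhds_prod_eq] at ht
  obtain ⟨U, hU, V, hV, hUV⟩ := mem_prod_iff.mp ht
  have hV' (j : ℕ+) : ∃ n : ℕ+, j ≤ n ∧ wedgePt j (1 / ((n : ℕ) : ℝ)) ∈ V :=
    ((eventually_ge_atTop j).and
      ((tendsto_wedgePt_inv_atTop j).eventually_mem (by rwa [wedgePt_zero j 1]))).exists
  choose s hjs hsV using hV'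
  have hs : Tendsto s atTop atTop := tendsto_atTop_mono hjs tendsto_id
  obtain ⟨j, hj⟩ := (hs.eventually
    ((tendsto_wedgePt_inv_atTop s).eventually_mem (by rwa [wedgePt_zero s 1]))).exists
  exact ⟨_, hUV (mk_mem_prod hj (hsV j)), s, j, rfl⟩

theorem basepoint_notMem_Pset : (wedgePt (1 : ℕ+ → ℕ+) 0, wedgePt (1 : ℕ+) 0) ∉ Pset := by
  rintro ⟨s, j, h⟩
  have hfst := (wedgePt_eq_wedgePt_iff_of_ne_zero (one_div_pnat_ne_zero _)).mp (congrArg Prod.fst h)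
  exact one_div_pnat_ne_zero (s j) hfst.2.symm

theorem not_isClosed_Pset : ¬ IsClosed Pset := fun h =>
  basepoint_notMem_Pset (h.closure_subset basepoint_mem_closure_Pset)

theorem stmt13 :
    IsClosed[tQ] Pset ∧
      tQ < (inferInstance : TopologicalSpace (Wedge (ℕ+ → ℕ+) × Wedge ℕ+)) := by
  have hle : tQ ≤ (inferInstance : TopologicalSpace (Wedge (ℕ+ → ℕ+) × Wedge ℕ+)) :=
    continuous_iff_coinduced_le.mp (continuous_quot_mk.prodMap continuous_quot_mk)
  refine ⟨isClosed_Pset, hle.lt_of_ne fun h => not_isClosed_Pset ?_⟩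
  have hclosed := isClosed_Pset
  rwa [h] at hclosed
end

section
/- Fix n > m ≥ 0 and let U be a nonempty open subset of some Euclidean space ℝ^d. Let ρ_n : (ℝ × U)^n → ⊕_{u∈U} ℝ be the map (r_1,u_1,…,r_n,u_n) ↦ Σ_i r_i [u_i], and let F_{≤m}(U) be the set of elements of ⊕_{u∈U} ℝ whose support has at most m points. Then ρ_n⁻¹(F_{≤m}(U)) is closed in (ℝ × U)^n. -/
open Set Topology

/-!
Write `u i = (f i).2` and `r i = (f i).1`. Reindexing the points along any `g` can only merge
support points, so `#supp (∑ single (g (v i)) (r i)) ≤ #supp (∑ single (v i) (r i))`. Taking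
`g = u` and `g = invFun u` shows that `#supp (∑ single (u i) (r i)) ≤ m` holds iff for some
`p : ι → ι` with `u ∘ p = u` the vector `∑ single (p i) (r i) : ι →₀ ℝ` has at most `m`
nonzero coordinates. For fixed `p` both conditions are closed (the first is an equation in a
Hausdorff space, the second pulls back a finite union of coordinate subspaces of `ι → ℝ` along a
continuous map), and there are finitely many `p`.
-/

theorem isClosed_setOf_support_subset {ι M : Type*} [Zero M] [TopologicalSpace M] [T1Space M]
    (s : Set ι) : IsClosed {x : ι → M | Function.support x ⊆ s} := by
  simp only [Function.support_subset_iff', ofPred_forall]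
  exact isClosed_biInter fun i _ => isClosed_singleton.preimage (continuous_apply i)

theorem isClosed_setOf_ncard_support_le {ι M : Type*} [Finite ι] [Zero M] [TopologicalSpace M]
    [T1Space M] (m : ℕ) : IsClosed {x : ι → M | (Function.support x).ncard ≤ m} := by
  have : {x : ι → M | (Function.support x).ncard ≤ m} =
      ⋃ s ∈ {s : Set ι | s.ncard ≤ m}, {x | Function.support x ⊆ s} := by
    ext x
    simp only [mem_ofPred_eq, mem_iUnion, exists_prop]
    exact ⟨fun h => ⟨_, h, subset_rfl⟩, fun ⟨s, hs, hx⟩ => (ncard_le_ncard hx).trans hs⟩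
  rw [this]
  exact (Set.toFinite _).isClosed_biUnion fun s _ => isClosed_setOf_support_subset s

namespace Finsupp

theorem card_support_sum_single_comp_le {ι α β M : Type*} [AddCommMonoid M] (s : Finset ι)
    (g : α → β) (v : ι → α) (r : ι → M) :
    (∑ i ∈ s, single (g (v i)) (r i)).support.card ≤
      (∑ i ∈ s, single (v i) (r i)).support.card := by
  classical
  have : ∑ i ∈ s, single (g (v i)) (r i) = mapDomain g (∑ i ∈ s, single (v i) (r i)) := by
    simp only [mapDomain_finsetSum, mapDomain_single]
  rw [this]
  exact (Finset.card_le_card mapDomain_support).trans Finset.card_image_le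

theorem card_support_sum_single_le_iff {ι α M : Type*} [Fintype ι] [AddCommMonoid M]
    (u : ι → α) (r : ι → M) (m : ℕ) :
    (∑ i, single (u i) (r i)).support.card ≤ m ↔
      ∃ p : ι → ι, (∀ i, u (p i) = u i) ∧ (∑ i, single (p i) (r i)).support.card ≤ m := by
  constructor
  · intro h
    rcases isEmpty_or_nonempty ι with hι | hι
    · exact ⟨id, fun _ => rfl, by simp⟩
    refine ⟨fun i => Function.invFun u (u i), fun i => Function.invFun_eq ⟨i, rfl⟩, ?_⟩
    exact (card_support_sum_single_comp_le _ _ _ _).trans h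
  · rintro ⟨p, hp, h⟩
    calc (∑ i, single (u i) (r i)).support.card
        = (∑ i, single (u (p i)) (r i)).support.card := by simp only [hp]
      _ ≤ m := (card_support_sum_single_comp_le _ _ _ _).trans h

theorem continuous_coe_sum_single {ι α M X : Type*} [Fintype ι] [DecidableEq α] [AddCommMonoid M]
    [TopologicalSpace M] [ContinuousAdd M] [TopologicalSpace X] (v : ι → α) {r : X → ι → M}
    (hr : Continuous r) : Continuous fun x => ⇑(∑ i, single (v i) (r x i)) := by
  simp only [coe_finsetSum, single_eq_pi_single]
  exact continuous_finsetSum _ fun i _ =>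
    (continuous_single (v i)).comp ((continuous_apply i).comp hr)

end Finsupp

theorem isClosed_setOf_card_support_sum_single_le {ι X M : Type*} [Fintype ι] [TopologicalSpace X]
    [T2Space X] [AddCommMonoid M] [TopologicalSpace M] [ContinuousAdd M] [T1Space M] (m : ℕ) :
    IsClosed {f : ι → M × X | (∑ i, Finsupp.single (f i).2 (f i).1).support.card ≤ m} := by
  classical
  have : {f : ι → M × X | (∑ i, Finsupp.single (f i).2 (f i).1).support.card ≤ m} =
      ⋃ p : ι → ι, {f | ∀ i, (f (p i)).2 = (f i).2} ∩
        {f | (∑ i, Finsupp.single (p i) (f i).1).support.card ≤ m} := by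
    ext f
    simp only [mem_ofPred_eq, mem_iUnion, mem_inter_iff]
    exact Finsupp.card_support_sum_single_le_iff _ _ m
  rw [this]
  refine isClosed_iUnion_of_finite fun p => .inter ?_ ?_
  · simp only [ofPred_forall]
    exact isClosed_iInter fun i => isClosed_eq (by fun_prop) (by fun_prop)
  · simp only [← Set.ncard_coe_finset, ← Finsupp.fun_support_eq]
    exact (isClosed_setOf_ncard_support_le m).preimage
      (Finsupp.continuous_coe_sum_single p (by fun_prop))

theorem stmt15_general {d : ℕ} (U : Set (Fin d → ℝ))
    {n m : ℕ} :
    IsClosed {f : Fin n → ℝ × U |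
      (∑ i : Fin n, Finsupp.single (f i).2 (f i).1 : U →₀ ℝ).support.card ≤ m} :=
  isClosed_setOf_card_support_sum_single_le m

theorem stmt15 {d : ℕ} (U : Set (Fin d → ℝ)) (hU : IsOpen U) (hne : U.Nonempty)
    {n m : ℕ} (hnm : m < n) :
    IsClosed {f : Fin n → ℝ × U |
      (∑ i : Fin n, Finsupp.single (f i).2 (f i).1 : U →₀ ℝ).support.card ≤ m} :=
  stmt15_general U
end

section
/- Let U be a nonempty open subset of ℝ^d and ρ_n : (ℝ × U)^n → ⊕_{u∈U} ℝ the map (r_1,u_1,…,r_n,u_n) ↦ Σ_i r_i [u_i]. Let [U] = { [u] : u ∈ U } be the image of the canonical basis map. Then ρ_n⁻¹([U]) is closed in (ℝ × U)^n for every n ≥ 1. -/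
open Set Topology

theorem stmt16 {d : ℕ} (U : Set (Fin d → ℝ)) (hU : IsOpen U) (hne : U.Nonempty)
    {n : ℕ} (hn : 1 ≤ n) :
    IsClosed {f : Fin n → ℝ × U |
      ∃ u : U, (∑ i : Fin n, Finsupp.single (f i).2 (f i).1 : U →₀ ℝ)
        = Finsupp.single u 1} := by
  have key : {f : Fin n → ℝ × U |
      ∃ u : U, (∑ i : Fin n, Finsupp.single (f i).2 (f i).1 : U →₀ ℝ)
        = Finsupp.single u 1}
      = ⋃ i : Fin n, ⋂ φ : C(U, ℝ),
          {f : Fin n → ℝ × U | (∑ j : Fin n, (f j).1 * φ (f j).2) = φ (f i).2} := by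
    ext f
    simp only [mem_setOf_eq, mem_iUnion, mem_iInter]
    constructor
    · rintro ⟨u, hu⟩
      -- u must be one of the (f i).2
      have h1 : (∑ i : Fin n, Finsupp.single (f i).2 (f i).1 : U →₀ ℝ) u
          = (Finsupp.single u (1:ℝ)) u := by rw [hu]
      rw [Finsupp.single_eq_same, Finsupp.finset_sum_apply] at h1
      have hex : ∃ i : Fin n, (f i).2 = u := by
        by_contra h
        push_neg at h
        have : (∑ j : Fin n, (Finsupp.single (f j).2 (f j).1 : U →₀ ℝ) u) = 0 := by
          refine Finset.sum_eq_zero fun j _ => ?_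
          rw [Finsupp.single_apply, if_neg (h j)]
        rw [this] at h1
        exact one_ne_zero h1.symm
      obtain ⟨i, hi⟩ := hex
      refine ⟨i, fun φ => ?_⟩
      have h2 := congrArg (Finsupp.linearCombination ℝ (fun x : U => φ x)) hu
      rw [map_sum] at h2
      simp only [Finsupp.linearCombination_single, smul_eq_mul, one_mul] at h2
      rw [hi]
      exact h2
    · rintro ⟨i, hi⟩
      refine ⟨(f i).2, ?_⟩
      ext w
      -- build a bump function at w
      set T : Finset U := (Finset.univ.image fun j : Fin n => (f j).2).erase w with hT
      obtain ⟨ε, hε, hεT⟩ : ∃ ε > (0:ℝ), ∀ v ∈ T, ε ≤ dist v w := by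
        rcases T.eq_empty_or_nonempty with h | h
        · exact ⟨1, one_pos, by simp [h]⟩
        · refine ⟨T.inf' h (fun v => dist v w), ?_, fun v hv => Finset.inf'_le _ hv⟩
          obtain ⟨v, hv, hve⟩ := T.exists_mem_eq_inf' h (fun v => dist v w)
          rw [hve]
          exact dist_pos.mpr (Finset.ne_of_mem_erase hv)
      set φ : C(U, ℝ) := ⟨fun x => max 0 (1 - dist x w / ε), by
        refine continuous_const.max ?_
        exact continuous_const.sub ((continuous_id.dist continuous_const).div_const ε)⟩ with hφ
      have hφw : φ w = 1 := by simp [hφ]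
      have hφ0 : ∀ v : U, v ≠ w → v ∈ T ∪ {w} → φ v = 0 := by
        intro v hvw hv
        have hvT : v ∈ T := by
          rcases Finset.mem_union.mp hv with h | h
          · exact h
          · exact absurd (Finset.mem_singleton.mp h) hvw
        have : ε ≤ dist v w := hεT v hvT
        simp only [hφ, ContinuousMap.coe_mk]
        rw [max_eq_left]
        have h1 : (1:ℝ) ≤ dist v w / ε := (one_le_div hε).mpr this
        linarith
      have hmem : ∀ j : Fin n, (f j).2 ∈ T ∪ {w} := by
        intro j
        by_cases h : (f j).2 = w
        · exact Finset.mem_union_right _ (Finset.mem_singleton.mpr h)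
        · exact Finset.mem_union_left _ (Finset.mem_erase.mpr ⟨h, Finset.mem_image_of_mem _ (Finset.mem_univ j)⟩)
      have key2 := hi φ
      have hL : (∑ j : Fin n, (f j).1 * φ (f j).2)
          = (∑ j : Fin n, (Finsupp.single (f j).2 (f j).1 : U →₀ ℝ) w) := by
        refine Finset.sum_congr rfl fun j _ => ?_
        rw [Finsupp.single_apply]
        by_cases h : (f j).2 = w
        · rw [if_pos h, h, hφw, mul_one]
        · rw [if_neg h, hφ0 _ h (hmem j), mul_zero]
      have hR : φ (f i).2 = (Finsupp.single (f i).2 (1:ℝ) : U →₀ ℝ) w := by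
        rw [Finsupp.single_apply]
        by_cases h : (f i).2 = w
        · rw [if_pos h, h, hφw]
        · rw [if_neg h, hφ0 _ h (hmem i)]
      rw [Finsupp.finset_sum_apply, ← hL, key2, hR]
  rw [key]
  refine isClosed_iUnion_of_finite fun i => isClosed_iInter fun φ => ?_
  refine isClosed_eq ?_ ?_
  · exact continuous_finset_sum _ fun j _ =>
      ((continuous_apply j).fst.mul (φ.continuous.comp (continuous_apply j).snd))
  · exact φ.continuous.comp (continuous_apply i).snd
end

section
/- Let U be a nonempty open subset of ℝ^d, A a closed subset of U (in the subspace topology), and ρ_n : (ℝ × U)^n → ⊕_{u∈U} ℝ the map (r_1,u_1,…,r_n,u_n) ↦ Σ_i r_i [u_i]. Then ρ_n⁻¹([A]) is closed in (ℝ × U)^n for every n ≥ 1, where [A] = { [a] : a ∈ A }. -/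
open Set Topology

theorem stmt17 {d : ℕ} (U A : Set (Fin d → ℝ)) (hU : IsOpen U) (hne : U.Nonempty)
    (hAU : A ⊆ U) (hA : IsClosed (((↑) : U → Fin d → ℝ) ⁻¹' A))
    {n : ℕ} (hn : 1 ≤ n) :
    IsClosed {f : Fin n → ℝ × U |
      ∃ u : U, (u : Fin d → ℝ) ∈ A ∧
        (∑ i : Fin n, Finsupp.single (f i).2 (f i).1 : U →₀ ℝ) = Finsupp.single u 1} := by
  classical
  -- key: a finsupp is determined by pairing with continuous test functions
  have key : ∀ (g : U →₀ ℝ) (a : U),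
      (∀ φ : C(U, ℝ), (Finsupp.linearCombination ℝ (⇑φ)) g = φ a) → g = Finsupp.single a 1 := by
    intro g a h
    ext v
    obtain ⟨φ, hφ0, hφ1, -⟩ := exists_continuous_zero_one_of_isClosed
      (s := ((((insert a g.support : Finset U)).erase v : Finset U) : Set U)) (t := {v})
      (Set.Finite.isClosed (Finset.finite_toSet _)) isClosed_singleton
      (by
        rw [Set.disjoint_singleton_right]
        simp)
    have hv : φ v = 1 := hφ1 (Set.mem_singleton v)
    have h0 : ∀ w : U, w ∈ (insert a g.support : Finset U) → w ≠ v → φ w = 0 := by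
      intro w hw hwv
      exact hφ0 (Finset.mem_coe.2 (Finset.mem_erase.2 ⟨hwv, hw⟩))
    have hL : (Finsupp.linearCombination ℝ (⇑φ)) g = g v := by
      rw [Finsupp.linearCombination_apply, Finsupp.sum]
      rw [Finset.sum_eq_single v]
      · by_cases hvs : v ∈ g.support
        · simp [hv]
        · simp [Finsupp.notMem_support_iff.1 hvs]
      · intro w hw hwv
        simp [h0 w (Finset.mem_insert_of_mem hw) hwv]
      · intro hvs
        simp [Finsupp.notMem_support_iff.1 hvs]
    have ha : φ a = (Finsupp.single a 1 : U →₀ ℝ) v := by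
      by_cases hav : a = v
      · subst hav; simp [hv]
      · rw [h0 a (Finset.mem_insert_self a _) hav, Finsupp.single_apply]
        simp [hav]
    rw [← hL, h, ha]
  have hset : {f : Fin n → ℝ × U |
      ∃ u : U, (u : Fin d → ℝ) ∈ A ∧
        (∑ i : Fin n, Finsupp.single (f i).2 (f i).1 : U →₀ ℝ) = Finsupp.single u 1}
      = ⋃ j : Fin n, ({f : Fin n → ℝ × U | ((f j).2 : Fin d → ℝ) ∈ A} ∩
        ⋂ φ : C(U, ℝ), {f : Fin n → ℝ × U |
          ∑ i : Fin n, (f i).1 * φ (f i).2 = φ (f j).2}) := by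
    ext f
    constructor
    · rintro ⟨u, huA, hsum⟩
      -- u must be one of the (f j).2
      have : ∃ j : Fin n, (f j).2 = u := by
        by_contra hcon
        push_neg at hcon
        have := congrArg (fun g : U →₀ ℝ => g u) hsum
        simp only [Finsupp.finset_sum_apply, Finsupp.single_apply] at this
        simp [hcon] at this
      obtain ⟨j, hj⟩ := this
      refine Set.mem_iUnion.2 ⟨j, ⟨by simp only [Set.mem_setOf_eq]; rw [hj]; exact huA, ?_⟩⟩
      refine Set.mem_iInter.2 fun φ => ?_
      have := congrArg (Finsupp.linearCombination ℝ (⇑φ)) hsum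
      rw [map_sum, Finsupp.linearCombination_single] at this
      simp only [Finsupp.linearCombination_single, smul_eq_mul, one_mul] at this
      simpa [hj] using this
    · intro hf
      obtain ⟨j, hjA, hjφ⟩ := Set.mem_iUnion.1 hf
      refine ⟨(f j).2, hjA, key _ _ fun φ => ?_⟩
      rw [map_sum]
      simp only [Finsupp.linearCombination_single, smul_eq_mul]
      exact Set.mem_iInter.1 hjφ φ
  rw [hset]
  refine isClosed_iUnion_of_finite fun j => IsClosed.inter ?_ ?_
  · exact hA.preimage (continuous_snd.comp (continuous_apply j))
  · refine isClosed_iInter fun φ => isClosed_eq ?_ ?_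
    · exact continuous_finset_sum _ fun i _ =>
        ((continuous_fst.comp (continuous_apply i)).mul
          (φ.continuous.comp (continuous_snd.comp (continuous_apply i))))
    · exact φ.continuous.comp (continuous_snd.comp (continuous_apply j))
end

section
/- Let X be an increasing union X = ⋃_n X_n of topological vector spaces over ℝ where each X_n is a closed linear subspace of X_{n+1}, each X_n is a k_ω-space whose topology makes addition and scalar multiplication continuous, and X carries the colimit topology (A closed iff A ∩ X_n closed for all n). Assume moreover that for every n, the product topology on X_n × X_n coincides with the colimit-compatible topology (i.e., the k_ω-product coincides with the topological product). Then addition X × X → X is continuous, where X × X carries the product topology, and hence X is a topological vector space. -/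
open Set Topology

/-- `S` is relatively closed in `K`. -/
def RelC {α : Type*} [TopologicalSpace α] (S K : Set α) : Prop :=
  ∃ C, IsClosed C ∧ S ∩ K = C ∩ K

/-- `S` is relatively open in `K`. -/
def RelO {α : Type*} [TopologicalSpace α] (S K : Set α) : Prop :=
  ∃ O, IsOpen O ∧ S ∩ K = O ∩ K

lemma inter_compl_congr {α : Type*} {S T K : Set α} (h : S ∩ K = T ∩ K) :
    Sᶜ ∩ K = Tᶜ ∩ K := by
  ext x
  have hx := Set.ext_iff.1 h x
  simp only [Set.mem_inter_iff, Set.mem_compl_iff] at *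
  constructor
  · rintro ⟨hs, hk⟩; exact ⟨fun ht => hs (hx.2 ⟨ht, hk⟩).1, hk⟩
  · rintro ⟨ht, hk⟩; exact ⟨fun hs => ht (hx.1 ⟨hs, hk⟩).1, hk⟩

lemma relO_compl {α : Type*} [TopologicalSpace α] {S K : Set α} (h : RelC S K) :
    RelO Sᶜ K := by
  obtain ⟨C, hC, hE⟩ := h
  exact ⟨Cᶜ, hC.isOpen_compl, inter_compl_congr hE⟩

lemma relC_compl {α : Type*} [TopologicalSpace α] {S K : Set α} (h : RelO S K) :
    RelC Sᶜ K := by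
  obtain ⟨O, hO, hE⟩ := h
  exact ⟨Oᶜ, hO.isClosed_compl, inter_compl_congr hE⟩

lemma relO_of_nbhds {α : Type*} [TopologicalSpace α] {S K : Set α}
    (h : ∀ x ∈ S ∩ K, ∃ O, IsOpen O ∧ x ∈ O ∧ O ∩ K ⊆ S) : RelO S K := by
  classical
  choose! O hOopen hxO hOK using h
  refine ⟨⋃ x ∈ S ∩ K, O x, isOpen_biUnion hOopen, ?_⟩
  ext y
  constructor
  · rintro ⟨hyS, hyK⟩
    exact ⟨Set.mem_biUnion ⟨hyS, hyK⟩ (hxO y ⟨hyS, hyK⟩), hyK⟩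
  · rintro ⟨hyO, hyK⟩
    obtain ⟨x, hx, hyOx⟩ := Set.mem_iUnion₂.1 hyO
    exact ⟨hOK x hx ⟨hyOx, hyK⟩, hyK⟩

lemma isClosed_preimage_val_of_relC {α : Type*} [TopologicalSpace α] {K S : Set α}
    (h : RelC S K) : IsClosed (((↑) : K → α) ⁻¹' S) := by
  obtain ⟨C, hC, hE⟩ := h
  have heq : (((↑) : K → α) ⁻¹' S) = (((↑) : K → α) ⁻¹' C) := by
    ext x
    have hx := Set.ext_iff.1 hE x.1
    exact ⟨fun hS => (hx.1 ⟨hS, x.2⟩).1, fun hCx => (hx.2 ⟨hCx, x.2⟩).1⟩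
  rw [heq]
  exact hC.preimage continuous_subtype_val

lemma relC_of_isClosed_preimage_val {α : Type*} [TopologicalSpace α] {K S : Set α}
    (h : IsClosed (((↑) : K → α) ⁻¹' S)) : RelC S K := by
  obtain ⟨C, hC, hCeq⟩ := IsEmbedding.subtypeVal.toIsInducing.isClosed_iff.1 h
  refine ⟨C, hC, ?_⟩
  ext x
  constructor
  · rintro ⟨hS, hK⟩
    have : (⟨x, hK⟩ : K) ∈ ((↑) : K → α) ⁻¹' S := hS
    rw [← hCeq] at this
    exact ⟨this, hK⟩
  · rintro ⟨hCx, hK⟩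
    have : (⟨x, hK⟩ : K) ∈ ((↑) : K → α) ⁻¹' C := hCx
    rw [hCeq] at this
    exact ⟨this, hK⟩

lemma relC_prod_of_isClosed_preimage {Y Z : Type*} [TopologicalSpace Y] [TopologicalSpace Z]
    {K : Set Y} {K' : Set Z} {G : Set (Y × Z)}
    (h : IsClosed ((fun p : K × K' => ((p.1 : Y), (p.2 : Z))) ⁻¹' G)) :
    RelC G (K ×ˢ K') := by
  have he : IsEmbedding (fun p : K × K' => ((p.1 : Y), (p.2 : Z))) :=
    IsEmbedding.subtypeVal.prodMap IsEmbedding.subtypeVal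
  obtain ⟨C, hC, hCeq⟩ := he.toIsInducing.isClosed_iff.1 h
  refine ⟨C, hC, ?_⟩
  ext p
  constructor
  · rintro ⟨hG, hK⟩
    have hq : ((⟨p.1, hK.1⟩, ⟨p.2, hK.2⟩) : K × K') ∈
        (fun p : K × K' => ((p.1 : Y), (p.2 : Z))) ⁻¹' G := by
      simp only [Set.mem_preimage]; exact hG
    rw [← hCeq] at hq
    exact ⟨hq, hK⟩
  · rintro ⟨hCp, hK⟩
    have hq : ((⟨p.1, hK.1⟩, ⟨p.2, hK.2⟩) : K × K') ∈
        (fun p : K × K' => ((p.1 : Y), (p.2 : Z))) ⁻¹' C := by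
      simp only [Set.mem_preimage]; exact hCp
    rw [hCeq] at hq
    exact ⟨hq, hK⟩

/-- One-sided shrinking step: a compact subset of an open set, inside a compact Hausdorff
piece, can be thickened to a compact set which is a relative neighborhood. -/
lemma komega_side_step {Y : Type*} [TopologicalSpace Y] {Ks : Set Y}
    (hKs : IsCompact Ks) (ht : T2Space Ks)
    {P U : Set Y} (hP : IsCompact P) (hPK : P ⊆ Ks) (hU : IsOpen U) (hPU : P ⊆ U) :
    ∃ P', IsCompact P' ∧ P' ⊆ U ∧ P' ⊆ Ks ∧
      ∃ U', IsOpen U' ∧ P ⊆ U' ∧ U' ∩ Ks ⊆ P' := by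
  haveI := ht
  haveI : CompactSpace Ks := isCompact_iff_compactSpace.1 hKs
  have hPsub : IsCompact (((↑) : Ks → Y) ⁻¹' P) := by
    rw [IsEmbedding.subtypeVal.isCompact_iff]
    rw [Subtype.image_preimage_coe, Set.inter_eq_self_of_subset_right hPK]
    exact hP
  obtain ⟨Lc, hLcc, hPint, hLcU⟩ :=
    exists_compact_between hPsub (hU.preimage continuous_subtype_val)
      (fun x hx => hPU hx)
  obtain ⟨O, hO, hOeq⟩ := isOpen_induced_iff.1 (isOpen_interior (s := Lc))
  refine ⟨((↑) : Ks → Y) '' Lc, hLcc.image continuous_subtype_val, ?_, ?_, O, hO, ?_, ?_⟩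
  · rintro y ⟨x, hx, rfl⟩
    exact hLcU hx
  · rintro y ⟨x, hx, rfl⟩
    exact x.2
  · intro x hx
    have hmem : (⟨x, hPK hx⟩ : Ks) ∈ ((↑) : Ks → Y) ⁻¹' P := hx
    have h2 := hPint hmem
    rw [← hOeq] at h2
    exact h2
  · rintro y ⟨hyO, hyKs⟩
    have : (⟨y, hyKs⟩ : Ks) ∈ interior Lc := by rw [← hOeq]; exact hyO
    exact ⟨⟨y, hyKs⟩, interior_subset this, rfl⟩

/-- Morita's theorem: the product of two `k_ω`-exhaustions (by compact Hausdorff pieces)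
detects open sets of the product. -/
lemma komega_prod {Y Z : Type*} [TopologicalSpace Y] [TopologicalSpace Z]
    (M : ℕ → Set Y) (L : ℕ → Set Z)
    (hMc : ∀ n, IsCompact (M n)) (hLc : ∀ n, IsCompact (L n))
    (hMt : ∀ n, T2Space (M n)) (hLt : ∀ n, T2Space (L n))
    (hMm : ∀ n, M n ⊆ M (n + 1)) (hLm : ∀ n, L n ⊆ L (n + 1))
    (hMu : (⋃ n, M n) = Set.univ) (hLu : (⋃ n, L n) = Set.univ)
    (hMk : ∀ S : Set Y, (∀ n, RelC S (M n)) → IsClosed S)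
    (hLk : ∀ S : Set Z, (∀ n, RelC S (L n)) → IsClosed S)
    (W : Set (Y × Z)) (hW : ∀ n, RelO W (M n ×ˢ L n)) : IsOpen W := by
  classical
  have hMM : ∀ {i j : ℕ}, i ≤ j → M i ⊆ M j := fun {i j} h =>
    monotone_nat_of_le_succ hMm h
  have hLL : ∀ {i j : ℕ}, i ≤ j → L i ⊆ L j := fun {i j} h =>
    monotone_nat_of_le_succ hLm h
  have hMopen : ∀ S : Set Y, (∀ n, RelO S (M n)) → IsOpen S := by
    intro S h
    rw [← isClosed_compl_iff]
    exact hMk _ (fun n => relC_compl (h n))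
  have hLopen : ∀ S : Set Z, (∀ n, RelO S (L n)) → IsOpen S := by
    intro S h
    rw [← isClosed_compl_iff]
    exact hLk _ (fun n => relC_compl (h n))
  rw [isOpen_iff_mem_nhds]
  rintro ⟨a, b⟩ hab
  obtain ⟨N₁, haN₁⟩ := Set.mem_iUnion.1 (hMu ▸ Set.mem_univ a)
  obtain ⟨N₂, hbN₂⟩ := Set.mem_iUnion.1 (hLu ▸ Set.mem_univ b)
  set N := max N₁ N₂ with hN
  have haN : a ∈ M N := hMM (le_max_left _ _) haN₁
  have hbN : b ∈ L N := hLL (le_max_right _ _) hbN₂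
  set Good : ℕ → Set Y × Set Z → Prop := fun n s =>
    IsCompact s.1 ∧ IsCompact s.2 ∧ s.1 ⊆ M (N + n) ∧ s.2 ⊆ L (N + n) ∧ s.1 ×ˢ s.2 ⊆ W
    with hGoodDef
  set Link : ℕ → Set Y × Set Z → Set Y × Set Z → Prop := fun n s t =>
    (∃ U, IsOpen U ∧ s.1 ⊆ U ∧ U ∩ M (N + n + 1) ⊆ t.1) ∧
    (∃ V, IsOpen V ∧ s.2 ⊆ V ∧ V ∩ L (N + n + 1) ⊆ t.2) with hLinkDef
  have key : ∀ n s, ∃ t, Good n s → Good (n + 1) t ∧ Link n s t := by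
    intro n s
    by_cases hg : Good n s
    · obtain ⟨hP, hQ, hPM, hQL, hPQW⟩ := hg
      obtain ⟨O, hO, hOeq⟩ := hW (N + n + 1)
      have hPQO : s.1 ×ˢ s.2 ⊆ O := by
        rintro p hp
        have hmem : p ∈ M (N + n + 1) ×ˢ L (N + n + 1) :=
          ⟨hMm _ (hPM hp.1), hLm _ (hQL hp.2)⟩
        exact ((Set.ext_iff.1 hOeq p).1 ⟨hPQW hp, hmem⟩).1
      obtain ⟨U, V, hU, hV, hPU, hQV, hUVO⟩ := generalized_tube_lemma hP hQ hO hPQO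
      obtain ⟨P', hP'c, hP'U, hP'K, U', hU', hPU', hU'P'⟩ :=
        komega_side_step (hMc (N + n + 1)) (hMt _) hP ((hPM).trans (hMm _)) hU hPU
      obtain ⟨Q', hQ'c, hQ'V, hQ'K, V', hV', hQV', hV'Q'⟩ :=
        komega_side_step (hLc (N + n + 1)) (hLt _) hQ ((hQL).trans (hLm _)) hV hQV
      refine ⟨(P', Q'), fun _ => ⟨⟨hP'c, hQ'c, hP'K, hQ'K, ?_⟩,
        ⟨U', hU', hPU', hU'P'⟩, ⟨V', hV', hQV', hV'Q'⟩⟩⟩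
      intro p hp
      have hpsq : p ∈ M (N + n + 1) ×ˢ L (N + n + 1) := ⟨hP'K hp.1, hQ'K hp.2⟩
      have hpO : p ∈ O := hUVO ⟨hP'U hp.1, hQ'V hp.2⟩
      exact ((Set.ext_iff.1 hOeq p).2 ⟨hpO, hpsq⟩).1
    · exact ⟨s, fun h => absurd h hg⟩
  choose f hf using key
  set seq : ℕ → Set Y × Set Z := fun n => Nat.rec (({a}, {b}) : Set Y × Set Z) f n
    with hseq
  have hGood : ∀ n, Good n (seq n) := by
    intro n
    induction n with
    | zero =>
      refine ⟨isCompact_singleton, isCompact_singleton,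
        Set.singleton_subset_iff.2 haN, Set.singleton_subset_iff.2 hbN, ?_⟩
      rintro ⟨x, y⟩ ⟨hx, hy⟩
      simp only [Set.mem_singleton_iff] at hx hy
      rw [hx, hy]
      exact hab
    | succ n ih => exact (hf n (seq n) ih).1
  have hLink : ∀ n, Link n (seq n) (seq (n + 1)) := fun n => (hf n (seq n) (hGood n)).2
  have hIncr1 : ∀ n, (seq n).1 ⊆ (seq (n + 1)).1 := by
    intro n
    obtain ⟨⟨U, hU, hsU, hUs⟩, -⟩ := hLink n
    exact fun x hx => hUs ⟨hsU hx, hMm _ ((hGood n).2.2.1 hx)⟩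
  have hIncr2 : ∀ n, (seq n).2 ⊆ (seq (n + 1)).2 := by
    intro n
    obtain ⟨-, ⟨V, hV, hsV, hVs⟩⟩ := hLink n
    exact fun x hx => hVs ⟨hsV hx, hLm _ ((hGood n).2.2.2.1 hx)⟩
  have hMono1 : ∀ {i j : ℕ}, i ≤ j → (seq i).1 ⊆ (seq j).1 := fun {i j} h =>
    monotone_nat_of_le_succ hIncr1 h
  have hMono2 : ∀ {i j : ℕ}, i ≤ j → (seq i).2 ⊆ (seq j).2 := fun {i j} h =>
    monotone_nat_of_le_succ hIncr2 h
  set Uset : Set Y := ⋃ i, (seq i).1 with hUset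
  set Vset : Set Z := ⋃ i, (seq i).2 with hVset
  have hUopen : IsOpen Uset := by
    apply hMopen
    intro m
    apply relO_of_nbhds
    rintro x ⟨hxU, hxM⟩
    obtain ⟨i, hxi⟩ := Set.mem_iUnion.1 hxU
    obtain ⟨⟨U, hU, hsU, hUs⟩, -⟩ := hLink (max i m)
    refine ⟨U, hU, hsU (hMono1 (le_max_left i m) hxi), ?_⟩
    rintro y ⟨hyU, hyM⟩
    have hy : y ∈ M (N + max i m + 1) := hMM (by omega) hyM
    exact Set.mem_iUnion.2 ⟨max i m + 1, hUs ⟨hyU, hy⟩⟩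
  have hVopen : IsOpen Vset := by
    apply hLopen
    intro m
    apply relO_of_nbhds
    rintro x ⟨hxV, hxL⟩
    obtain ⟨i, hxi⟩ := Set.mem_iUnion.1 hxV
    obtain ⟨-, ⟨V, hV, hsV, hVs⟩⟩ := hLink (max i m)
    refine ⟨V, hV, hsV (hMono2 (le_max_left i m) hxi), ?_⟩
    rintro y ⟨hyV, hyL⟩
    have hy : y ∈ L (N + max i m + 1) := hLL (by omega) hyL
    exact Set.mem_iUnion.2 ⟨max i m + 1, hVs ⟨hyV, hy⟩⟩
  rw [mem_nhds_iff]
  refine ⟨Uset ×ˢ Vset, ?_, hUopen.prod hVopen,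
    ⟨Set.mem_iUnion.2 ⟨0, rfl⟩, Set.mem_iUnion.2 ⟨0, rfl⟩⟩⟩
  rintro ⟨x, y⟩ ⟨hx, hy⟩
  obtain ⟨i, hxi⟩ := Set.mem_iUnion.1 hx
  obtain ⟨j, hyj⟩ := Set.mem_iUnion.1 hy
  exact (hGood (max i j)).2.2.2.2
    ⟨hMono1 (le_max_left i j) hxi, hMono2 (le_max_right i j) hyj⟩

theorem stmt19 {X : Type*} [AddCommGroup X] [Module ℝ X] [TopologicalSpace X]
    (A : ℕ → Submodule ℝ X)
    -- increasing union of linear subspaces exhausting `X`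
    (hmono : ∀ n, (A n : Set X) ⊆ (A (n + 1) : Set X))
    (hunion : (⋃ n, (A n : Set X)) = Set.univ)
    -- each `X_n` is closed
    (hcl : ∀ n, IsClosed (A n : Set X))
    -- `X` carries the colimit topology of the `X_n`
    (hcolim : ∀ F : Set X, IsClosed F ↔ ∀ n, IsClosed ((Subtype.val : A n → X) ⁻¹' F))
    -- each `X_n` is a Hausdorff `k_ω`-space which is a topological vector space,
    (hT2 : ∀ n, T2Space (A n))
    (haddn : ∀ n, ContinuousAdd (A n))
    (hsmuln : ∀ n, ContinuousSMul ℝ (A n))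
    -- and the `k_ω`-product topology on `X_n × X_n` coincides with the product topology:
    -- some `k_ω`-structure of `X_n` whose squares form a `k_ω`-structure of the
    -- topological product `X_n × X_n`
    (hk : ∀ n, ∃ K : ℕ → Set (A n), IsKOmegaStructure K ∧
      IsKOmegaStructure (fun i => K i ×ˢ K i)) :
    Continuous (fun p : X × X => p.1 + p.2) ∧ ContinuousAdd X ∧ ContinuousSMul ℝ X := by
  classical
  have hAmono : ∀ {i j : ℕ}, i ≤ j → (A i : Set X) ⊆ (A j : Set X) := fun {i j} h =>
    monotone_nat_of_le_succ hmono h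
  set K : (n : ℕ) → ℕ → Set (A n) := fun n => (hk n).choose with hKdef
  have hKs : ∀ n, IsKOmegaStructure (K n) := fun n => (hk n).choose_spec.1
  set C : ℕ → ℕ → Set X := fun m j => Subtype.val '' (K m j) with hCdef
  set L : ℕ → Set X := fun n => ⋃ m ∈ Set.Iic n, ⋃ j ∈ Set.Iic n, C m j with hLdef
  have hmemL : ∀ {x : X} {n : ℕ}, x ∈ L n ↔ ∃ m ≤ n, ∃ j ≤ n, x ∈ C m j := by
    intro x n
    simp [hLdef, Set.mem_iUnion]
  have hCcomp : ∀ m j, IsCompact (C m j) := fun m j =>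
    ((hKs m).1 j).image continuous_subtype_val
  have hCA : ∀ m j, C m j ⊆ (A m : Set X) := by
    rintro m j x ⟨y, -, rfl⟩
    exact y.2
  have hLA : ∀ n, L n ⊆ (A n : Set X) := by
    intro n x hx
    obtain ⟨m, hm, j, hj, hxc⟩ := hmemL.1 hx
    exact hAmono hm (hCA m j hxc)
  have hLcomp : ∀ n, IsCompact (L n) := fun n =>
    (Set.finite_Iic n).isCompact_biUnion (fun m _ =>
      (Set.finite_Iic n).isCompact_biUnion (fun j _ => hCcomp m j))
  have hLT2 : ∀ n, T2Space (L n) := by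
    intro n
    haveI := hT2 n
    exact (IsEmbedding.inclusion (hLA n)).t2Space
  have hLmono : ∀ n, L n ⊆ L (n + 1) := by
    intro n x hx
    obtain ⟨m, hm, j, hj, h⟩ := hmemL.1 hx
    exact hmemL.2 ⟨m, hm.trans (Nat.le_succ n), j, hj.trans (Nat.le_succ n), h⟩
  have hLcover : (⋃ n, L n) = Set.univ := by
    rw [Set.eq_univ_iff_forall]
    intro x
    obtain ⟨m, hm⟩ := Set.mem_iUnion.1 (hunion ▸ Set.mem_univ x)
    have hxK : (⟨x, hm⟩ : A m) ∈ ⋃ j, K m j := ((hKs m).2.1) ▸ Set.mem_univ _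
    obtain ⟨j, hj⟩ := Set.mem_iUnion.1 hxK
    exact Set.mem_iUnion.2 ⟨max m j, hmemL.2 ⟨m, le_max_left m j, j, le_max_right m j,
      ⟨⟨x, hm⟩, hj, rfl⟩⟩⟩
  have hLk : ∀ S : Set X, (∀ n, RelC S (L n)) → IsClosed S := by
    intro S h
    rw [hcolim]
    intro m
    rw [(hKs m).2.2]
    intro j
    apply isClosed_preimage_val_of_relC
    obtain ⟨Z, hZ, hE⟩ := h (max m j)
    refine ⟨Subtype.val ⁻¹' Z, hZ.preimage continuous_subtype_val, ?_⟩
    ext y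
    have hyLn : y ∈ K m j → (y : X) ∈ L (max m j) := fun hy =>
      hmemL.2 ⟨m, le_max_left m j, j, le_max_right m j, ⟨y, hy, rfl⟩⟩
    constructor
    · rintro ⟨hyS, hyK⟩
      exact ⟨((Set.ext_iff.1 hE _).1 ⟨hyS, hyLn hyK⟩).1, hyK⟩
    · rintro ⟨hyZ, hyK⟩
      exact ⟨((Set.ext_iff.1 hE _).2 ⟨hyZ, hyLn hyK⟩).1, hyK⟩
  -- the exhaustion of ℝ
  set M : ℕ → Set ℝ := fun n => Set.Icc (-(n : ℝ)) n with hMdef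
  have hMcomp : ∀ n, IsCompact (M n) := fun n => isCompact_Icc
  have hMT2 : ∀ n, T2Space (M n) := fun n => inferInstance
  have hMmono : ∀ n, M n ⊆ M (n + 1) := fun n =>
    Set.Icc_subset_Icc (by push_cast; linarith) (by push_cast; linarith)
  have hMcover : (⋃ n, M n) = Set.univ := by
    rw [Set.eq_univ_iff_forall]
    intro x
    obtain ⟨n, hn⟩ := exists_nat_ge |x|
    have := abs_le.1 hn
    exact Set.mem_iUnion.2 ⟨n, this.1, this.2⟩
  have hMk : ∀ S : Set ℝ, (∀ n, RelC S (M n)) → IsClosed S := by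
    intro S h
    rw [← isOpen_compl_iff, isOpen_iff_mem_nhds]
    intro x hx
    obtain ⟨n, hn⟩ := exists_nat_gt |x|
    obtain ⟨Z, hZ, hE⟩ := h n
    have hxIcc : x ∈ M n := ⟨(abs_lt.1 hn).1.le, (abs_lt.1 hn).2.le⟩
    have hxZ : x ∉ Z := fun hxZ => hx ((Set.ext_iff.1 hE x).2 ⟨hxZ, hxIcc⟩).1
    rw [mem_nhds_iff]
    refine ⟨Zᶜ ∩ Set.Ioo (-(n : ℝ)) n, ?_, hZ.isOpen_compl.inter isOpen_Ioo,
      ⟨hxZ, abs_lt.1 hn⟩⟩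
    rintro y ⟨hyZ, hyIoo⟩ hyS
    exact hyZ ((Set.ext_iff.1 hE y).1 ⟨hyS, Set.Ioo_subset_Icc_self hyIoo⟩).1
  -- continuity of addition
  have haddc : Continuous (fun p : X × X => p.1 + p.2) := by
    rw [continuous_iff_isClosed]
    intro F hF
    rw [← isOpen_compl_iff]
    apply komega_prod L L hLcomp hLcomp hLT2 hLT2 hLmono hLmono hLcover hLcover hLk hLk
    intro n
    apply relO_compl
    apply relC_prod_of_isClosed_preimage
    haveI := haddn n
    have h1 : Continuous (fun p : L n × L n =>
        ((Set.inclusion (hLA n) p.1 + Set.inclusion (hLA n) p.2 : A n) : X)) :=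
      continuous_subtype_val.comp
        (((continuous_inclusion (hLA n)).comp continuous_fst).add
          ((continuous_inclusion (hLA n)).comp continuous_snd))
    have h2 : Continuous (fun p : L n × L n => ((p.1 : X) + (p.2 : X))) := by
      apply h1.congr
      intro p
      simp
    exact hF.preimage h2
  -- continuity of scalar multiplication
  have hsmulc : Continuous (fun p : ℝ × X => p.1 • p.2) := by
    rw [continuous_iff_isClosed]
    intro F hF
    rw [← isOpen_compl_iff]
    apply komega_prod M L hMcomp hLcomp hMT2 hLT2 hMmono hLmono hMcover hLcover hMk hLk
    intro n
    apply relO_compl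
    apply relC_prod_of_isClosed_preimage
    haveI := hsmuln n
    have h1 : Continuous (fun p : M n × L n =>
        (((p.1 : ℝ) • Set.inclusion (hLA n) p.2 : A n) : X)) :=
      continuous_subtype_val.comp
        ((continuous_subtype_val.comp continuous_fst).smul
          ((continuous_inclusion (hLA n)).comp continuous_snd))
    have h2 : Continuous (fun p : M n × L n => (p.1 : ℝ) • (p.2 : X)) := by
      apply h1.congr
      intro p
      simp
    exact hF.preimage h2
  exact ⟨haddc, ⟨haddc⟩, ⟨hsmulc⟩⟩
end
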